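/- (KLMN theorem) Let H₀ be a positive self-adjoint operator with quadratic form q₀ and form domain Q₀, and let X be a symmetric quadratic form on Q₀ with |X(ψ,ψ)| ≤ a q₀(ψ,ψ) + b‖ψ‖² for some a < 1 and b ≥ 0. Then there exists a unique self-adjoint operator H_X with form domain Q₀ such that ⟨H_X^{1/2}φ, H_X^{1/2}ψ⟩ = q₀(φ,ψ) + X(φ,ψ) for all φ,ψ ∈ Q₀ (after shifting by the lower bound), and H_X ≥ −b. -/

import Mathlib

open scoped InnerProductSpace
open Complex

variable {H : Type} [NormedAddCommGroup H] [InnerProductSpace ℂ H] [CompleteSpace H]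

/-- Type synonym for the form domain `D(A)`, which will carry the form inner product. -/
def KLMNE (A : H →ₗ.[ℂ] H) : Type := A.domain

instance (A : H →ₗ.[ℂ] H) : AddCommGroup (KLMNE A) :=
  inferInstanceAs (AddCommGroup A.domain)

instance (A : H →ₗ.[ℂ] H) : Module ℂ (KLMNE A) :=
  inferInstanceAs (Module ℂ A.domain)

/-- Forgetting the synonym. -/
def KLMNE.un {A : H →ₗ.[ℂ] H} (x : KLMNE A) : A.domain := x

/-- Entering the synonym. -/
def KLMNE.mk {A : H →ₗ.[ℂ] H} (x : A.domain) : KLMNE A := x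

@[simp] lemma KLMNE.un_add {A : H →ₗ.[ℂ] H} (x y : KLMNE A) :
    (x + y).un = x.un + y.un := rfl

@[simp] lemma KLMNE.un_sub {A : H →ₗ.[ℂ] H} (x y : KLMNE A) :
    (x - y).un = x.un - y.un := rfl

@[simp] lemma KLMNE.un_smul {A : H →ₗ.[ℂ] H} (c : ℂ) (x : KLMNE A) :
    (c • x).un = c • x.un := rfl

@[simp] lemma KLMNE.un_mk {A : H →ₗ.[ℂ] H} (x : A.domain) : (KLMNE.mk x).un = x := rfl

@[simp] lemma KLMNE.un_zero {A : H →ₗ.[ℂ] H} : (0 : KLMNE A).un = 0 := rfl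

lemma KLMNE.eq_zero_of_un {A : H →ₗ.[ℂ] H} {x : KLMNE A} (h : ((x.un : A.domain) : H) = 0) :
    x = 0 := Subtype.ext h

/-- **KLMN theorem.**  Let `H₀` be a positive self-adjoint operator, presented through
`A = H₀^{1/2}` with form domain `Q₀ = D(A)` and `q₀(φ,ψ) = ⟪Aφ, Aψ⟫`.  Let `X` be a
symmetric sesquilinear form on `Q₀` with `|X(ψ,ψ)| ≤ a q₀(ψ,ψ) + b ‖ψ‖²` for some
`a < 1`, `b ≥ 0`.  Then there is a unique self-adjoint operator `H_X`, with domain inside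
`Q₀`, representing the form `q₀ + X`, and `H_X` is bounded below by `-b`. -/
theorem klmn
    (A : H →ₗ.[ℂ] H) (hdense : Dense (A.domain : Set H)) (hsa : IsSelfAdjoint A)
    (X : A.domain → A.domain → ℂ)
    (hlin : ∀ φ, IsLinearMap ℂ (X φ))
    (hsesq : ∀ (c : ℂ) (φ φ' ψ : A.domain),
      X (c • φ) ψ = starRingEnd ℂ c * X φ ψ ∧ X (φ + φ') ψ = X φ ψ + X φ' ψ)
    (hsymm : ∀ φ ψ : A.domain, X φ ψ = starRingEnd ℂ (X ψ φ))
    (a b : ℝ) (ha0 : 0 ≤ a) (ha : a < 1) (hb : 0 ≤ b)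
    (hbound : ∀ ψ : A.domain, ‖X ψ ψ‖ ≤ a * ‖A ψ‖ ^ 2 + b * ‖(ψ : H)‖ ^ 2) :
    ∃! B : H →ₗ.[ℂ] H, IsSelfAdjoint B ∧
      ∃ hdom : ∀ ψ : B.domain, (ψ : H) ∈ A.domain,
        (∀ (φ : A.domain) (ψ : B.domain),
          (⟪(φ : H), B ψ⟫_ℂ : ℂ) =
            ⟪A φ, A ⟨(ψ : H), hdom ψ⟩⟫_ℂ + X φ ⟨(ψ : H), hdom ψ⟩) ∧
        (∀ ψ : B.domain, -b * ‖(ψ : H)‖ ^ 2 ≤ ((⟪(ψ : H), B ψ⟫_ℂ : ℂ)).re) := by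
  classical
  -- A is formally self-adjoint
  have hAsymm : A.IsFormalAdjoint A := by
    have h := LinearPMap.adjoint_isFormalAdjoint (T := A) hdense
    rwa [(LinearPMap.isSelfAdjoint_def.mp hsa : LinearPMap.adjoint A = A)] at h
  have hAs : ∀ x y : A.domain, ⟪A x, (y : H)⟫_ℂ = ⟪(x : H), A y⟫_ℂ := fun x y => hAsymm x y
  -- linearity of X in the second argument
  have hX2add : ∀ (φ ψ ψ' : A.domain), X φ (ψ + ψ') = X φ ψ + X φ ψ' :=
    fun φ ψ ψ' => (hlin φ).map_add ψ ψ'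
  have hX2smul : ∀ (c : ℂ) (φ ψ : A.domain), X φ (c • ψ) = c * X φ ψ :=
    fun c φ ψ => (hlin φ).map_smul c ψ
  have hX2zero : ∀ φ : A.domain, X φ 0 = 0 := fun φ => (hlin φ).map_zero
  -- real part estimates for the diagonal
  have hXre : ∀ ψ : A.domain, |(X ψ ψ).re| ≤ a * ‖A ψ‖ ^ 2 + b * ‖(ψ : H)‖ ^ 2 := by
    intro ψ
    refine le_trans (Complex.abs_re_le_norm _) ?_
    exact hbound ψ
  have hdiag_re : ∀ ψ : A.domain, (⟪A ψ, A ψ⟫_ℂ + X ψ ψ).re = ‖A ψ‖ ^ 2 + (X ψ ψ).re := by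
    intro ψ
    rw [Complex.add_re]
    congr 1
    have h := inner_self_eq_norm_sq (𝕜 := ℂ) (A ψ)
    simpa using h
  -- real part of the shifted form
  have hfull_re : ∀ x y : A.domain,
      (⟪A x, A y⟫_ℂ + X x y + ((b + 1 : ℝ) : ℂ) * ⟪(x : H), (y : H)⟫_ℂ).re
        = (⟪A x, A y⟫_ℂ + X x y).re + (b + 1) * (⟪(x : H), (y : H)⟫_ℂ).re := by
    intro x y
    rw [Complex.add_re, Complex.re_ofReal_mul]
  have hinner_self_re : ∀ x : H, (⟪x, x⟫_ℂ).re = ‖x‖ ^ 2 := by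
    intro x
    have h := inner_self_eq_norm_sq (𝕜 := ℂ) x
    simpa using h
  have hElow : ∀ x : A.domain,
      (1 - a) * ‖A x‖ ^ 2 + ‖(x : H)‖ ^ 2
        ≤ (⟪A x, A x⟫_ℂ + X x x + ((b + 1 : ℝ) : ℂ) * ⟪(x : H), (x : H)⟫_ℂ).re := by
    intro x
    rw [hfull_re, hdiag_re, hinner_self_re]
    have h := (abs_le.mp (hXre x)).1
    nlinarith [norm_nonneg (A x), norm_nonneg ((x : H))]
  have hEup : ∀ x : A.domain,
      (⟪A x, A x⟫_ℂ + X x x + ((b + 1 : ℝ) : ℂ) * ⟪(x : H), (x : H)⟫_ℂ).re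
        ≤ (1 + a) * ‖A x‖ ^ 2 + (2 * b + 1) * ‖(x : H)‖ ^ 2 := by
    intro x
    rw [hfull_re, hdiag_re, hinner_self_re]
    have h := (abs_le.mp (hXre x)).2
    nlinarith [norm_nonneg (A x), norm_nonneg ((x : H))]
  -- the form inner product space structure on the synonym
  letI coreE : InnerProductSpace.Core ℂ (KLMNE A) :=
  { inner := fun x y => ⟪A x.un, A y.un⟫_ℂ + X x.un y.un
      + ((b + 1 : ℝ) : ℂ) * ⟪((x.un : A.domain) : H), ((y.un : A.domain) : H)⟫_ℂ
    conj_inner_symm := by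
      intro x y
      rw [map_add, map_add, map_mul, inner_conj_symm, inner_conj_symm, Complex.conj_ofReal,
        ← hsymm x.un y.un]
    re_inner_nonneg := by
      intro x
      dsimp only [RCLike.re_to_complex]
      have h := hElow x.un
      nlinarith [norm_nonneg (A x.un), norm_nonneg ((x.un : H)), sq_nonneg ‖A x.un‖,
        sq_nonneg ‖((x.un : A.domain) : H)‖]
    add_left := by
      intro x y z
      rw [KLMNE.un_add, LinearPMap.map_add, inner_add_left, (hsesq 0 x.un y.un z.un).2,
        Submodule.coe_add, inner_add_left]
      ring
    smul_left := by
      intro x y c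
      rw [KLMNE.un_smul, LinearPMap.map_smul, inner_smul_left, (hsesq c x.un y.un y.un).1,
        Submodule.coe_smul, inner_smul_left]
      ring
    definite := by
      intro x hx
      apply KLMNE.eq_zero_of_un
      have h0 : (⟪A x.un, A x.un⟫_ℂ + X x.un x.un
          + ((b + 1 : ℝ) : ℂ) * ⟪((x.un : A.domain) : H), ((x.un : A.domain) : H)⟫_ℂ).re = 0 := by
        rw [show (⟪A x.un, A x.un⟫_ℂ + X x.un x.un
          + ((b + 1 : ℝ) : ℂ) * ⟪((x.un : A.domain) : H), ((x.un : A.domain) : H)⟫_ℂ) = 0 from hx]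
        simp
      have h := hElow x.un
      rw [h0] at h
      have : ‖((x.un : A.domain) : H)‖ ^ 2 ≤ 0 := by nlinarith [sq_nonneg ‖A x.un‖]
      have hn : ‖((x.un : A.domain) : H)‖ = 0 := by nlinarith [norm_nonneg ((x.un : A.domain) : H)]
      exact norm_eq_zero.mp hn }
  letI instNE : NormedAddCommGroup (KLMNE A) := coreE.toNormedAddCommGroup
  letI instIE : InnerProductSpace ℂ (KLMNE A) := InnerProductSpace.ofCore coreE.toCore
  have hinnerE : ∀ x y : KLMNE A, ⟪x, y⟫_ℂ = ⟪A x.un, A y.un⟫_ℂ + X x.un y.un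
      + ((b + 1 : ℝ) : ℂ) * ⟪((x.un : A.domain) : H), ((y.un : A.domain) : H)⟫_ℂ := fun x y => rfl
  have hnormE : ∀ x : KLMNE A, ‖x‖ ^ 2 = (⟪x, x⟫_ℂ).re := by
    intro x
    have h := inner_self_eq_norm_sq (𝕜 := ℂ) x
    simp only [RCLike.re_to_complex] at h
    exact h.symm
  have h1a : (0 : ℝ) < 1 - a := by linarith
  have hlowE : ∀ x : KLMNE A,
      (1 - a) * ‖A x.un‖ ^ 2 + ‖((x.un : A.domain) : H)‖ ^ 2 ≤ ‖x‖ ^ 2 := by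
    intro x; rw [hnormE, hinnerE]; exact hElow x.un
  have hupE : ∀ x : KLMNE A,
      ‖x‖ ^ 2 ≤ (1 + a) * ‖A x.un‖ ^ 2 + (2 * b + 1) * ‖((x.un : A.domain) : H)‖ ^ 2 := by
    intro x; rw [hnormE, hinnerE]; exact hEup x.un
  have hcoe_le : ∀ x : KLMNE A, ‖((x.un : A.domain) : H)‖ ≤ ‖x‖ := by
    intro x
    have h := hlowE x
    nlinarith [norm_nonneg ((x.un : A.domain) : H), norm_nonneg x, sq_nonneg ‖A x.un‖,
      mul_nonneg h1a.le (sq_nonneg ‖A x.un‖)]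
  have hA_le : ∀ x : KLMNE A, ‖A x.un‖ ≤ Real.sqrt (1 - a)⁻¹ * ‖x‖ := by
    intro x
    have h := hlowE x
    have h1 : ‖A x.un‖ ^ 2 ≤ (1 - a)⁻¹ * ‖x‖ ^ 2 := by
      rw [inv_mul_eq_div, le_div_iff₀ h1a]
      nlinarith [sq_nonneg ‖((x.un : A.domain) : H)‖]
    calc ‖A x.un‖ = Real.sqrt (‖A x.un‖ ^ 2) := (Real.sqrt_sq (norm_nonneg _)).symm
      _ ≤ Real.sqrt ((1 - a)⁻¹ * ‖x‖ ^ 2) := Real.sqrt_le_sqrt h1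
      _ = Real.sqrt (1 - a)⁻¹ * ‖x‖ := by
          rw [Real.sqrt_mul (by positivity), Real.sqrt_sq (norm_nonneg _)]
  -- completeness of the form domain
  letI instCE : CompleteSpace (KLMNE A) := by
    apply Metric.complete_of_cauchySeq_tendsto
    intro u hu
    have key1 : ∀ x y : KLMNE A,
        ‖((x.un : A.domain) : H) - ((y.un : A.domain) : H)‖ ≤ ‖x - y‖ := by
      intro x y
      have h := hcoe_le (x - y)
      simpa using h
    have key2 : ∀ x y : KLMNE A, ‖A x.un - A y.un‖ ≤ Real.sqrt (1 - a)⁻¹ * ‖x - y‖ := by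
      intro x y
      have h := hA_le (x - y)
      rwa [KLMNE.un_sub, LinearPMap.map_sub] at h
    have h1 : CauchySeq fun n => (((u n).un : A.domain) : H) := by
      have lip : LipschitzWith 1 fun x : KLMNE A => ((x.un : A.domain) : H) := by
        apply LipschitzWith.of_dist_le_mul
        intro x y
        rw [dist_eq_norm, dist_eq_norm, NNReal.coe_one, one_mul]
        exact key1 x y
      exact lip.uniformContinuous.comp_cauchySeq hu
    have h2 : CauchySeq fun n => A ((u n).un) := by
      have lip : LipschitzWith (Real.sqrt (1 - a)⁻¹).toNNReal fun x : KLMNE A => A x.un := by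
        apply LipschitzWith.of_dist_le_mul
        intro x y
        rw [dist_eq_norm, dist_eq_norm, Real.coe_toNNReal _ (Real.sqrt_nonneg _)]
        exact key2 x y
      exact lip.uniformContinuous.comp_cauchySeq hu
    obtain ⟨x0, hx0⟩ := cauchySeq_tendsto_of_complete h1
    obtain ⟨g, hg⟩ := cauchySeq_tendsto_of_complete h2
    have hgx : ∀ φ : A.domain, ⟪g, (φ : H)⟫_ℂ = ⟪x0, A φ⟫_ℂ := by
      intro φ
      have t1 : Filter.Tendsto (fun n => ⟪A ((u n).un), (φ : H)⟫_ℂ) Filter.atTop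
          (nhds ⟪g, (φ : H)⟫_ℂ) := hg.inner tendsto_const_nhds
      have e : (fun n => ⟪A ((u n).un), (φ : H)⟫_ℂ)
          = fun n => ⟪((((u n).un) : A.domain) : H), A φ⟫_ℂ := funext fun n => hAs _ φ
      have t2 : Filter.Tendsto (fun n => ⟪A ((u n).un), (φ : H)⟫_ℂ) Filter.atTop
          (nhds ⟪x0, A φ⟫_ℂ) := by
        rw [e]; exact hx0.inner tendsto_const_nhds
      exact tendsto_nhds_unique t1 t2
    have hx0dom : x0 ∈ A.domain := by
      have hx' : x0 ∈ (LinearPMap.adjoint A).domain :=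
        LinearPMap.mem_adjoint_domain_of_exists _ ⟨g, fun φ => hgx φ⟩
      rwa [(LinearPMap.isSelfAdjoint_def.mp hsa : LinearPMap.adjoint A = A)] at hx'
    have hAx0 : A ⟨x0, hx0dom⟩ = g := by
      rw [← sub_eq_zero]
      refine hdense.eq_zero_of_inner_left ℂ fun v' hv' => ?_
      obtain ⟨v, rfl⟩ : ∃ v : A.domain, (v : H) = v' := ⟨⟨v', hv'⟩, rfl⟩
      rw [inner_sub_left, hAs ⟨x0, hx0dom⟩ v, ← hgx v, sub_self]
    refine ⟨KLMNE.mk ⟨x0, hx0dom⟩, ?_⟩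
    rw [tendsto_iff_dist_tendsto_zero]
    have hb1 : ∀ n, dist (u n) (KLMNE.mk ⟨x0, hx0dom⟩)
        ≤ Real.sqrt ((1 + a) * ‖A ((u n).un) - g‖ ^ 2
            + (2 * b + 1) * ‖((((u n).un) : A.domain) : H) - x0‖ ^ 2) := by
      intro n
      rw [dist_eq_norm]
      have h2 := hupE (u n - KLMNE.mk ⟨x0, hx0dom⟩)
      have e1 : A ((u n - KLMNE.mk ⟨x0, hx0dom⟩).un) = A ((u n).un) - g := by
        rw [KLMNE.un_sub, LinearPMap.map_sub, KLMNE.un_mk, hAx0]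
      have e2 : ((((u n - KLMNE.mk ⟨x0, hx0dom⟩).un) : A.domain) : H)
          = ((((u n).un) : A.domain) : H) - x0 := by
        rw [KLMNE.un_sub]; simp
      rw [e1, e2] at h2
      exact (Real.le_sqrt (norm_nonneg _) (by positivity)).mpr h2
    refine squeeze_zero (fun n => dist_nonneg) hb1 ?_
    have l1 : Filter.Tendsto (fun n => ‖A ((u n).un) - g‖) Filter.atTop (nhds 0) :=
      tendsto_iff_norm_sub_tendsto_zero.mp hg
    have l2 : Filter.Tendsto (fun n => ‖((((u n).un) : A.domain) : H) - x0‖) Filter.atTop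
        (nhds 0) := tendsto_iff_norm_sub_tendsto_zero.mp hx0
    have l3 : Filter.Tendsto (fun n => (1 + a) * ‖A ((u n).un) - g‖ ^ 2
        + (2 * b + 1) * ‖((((u n).un) : A.domain) : H) - x0‖ ^ 2) Filter.atTop (nhds 0) := by
      have h := ((l1.pow 2).const_mul (1 + a)).add ((l2.pow 2).const_mul (2 * b + 1))
      simpa using h
    have h := l3.sqrt
    simpa using h
  -- Riesz representation for the shifted form
  have hsolve : ∀ f : H, ∃ ψ : KLMNE A, ∀ φ : KLMNE A,
      ⟪φ, ψ⟫_ℂ = ⟪((φ.un : A.domain) : H), f⟫_ℂ := by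
    intro f
    let ℓ : KLMNE A →ₗ[ℂ] ℂ :=
      { toFun := fun φ => ⟪f, ((φ.un : A.domain) : H)⟫_ℂ
        map_add' := by
          intro x y
          show ⟪f, (((x + y).un : A.domain) : H)⟫_ℂ
            = ⟪f, ((x.un : A.domain) : H)⟫_ℂ + ⟪f, ((y.un : A.domain) : H)⟫_ℂ
          rw [KLMNE.un_add, Submodule.coe_add, inner_add_right]
        map_smul' := by
          intro c x
          show ⟪f, (((c • x).un : A.domain) : H)⟫_ℂ = RingHom.id ℂ c * ⟪f, ((x.un : A.domain) : H)⟫_ℂ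
          rw [KLMNE.un_smul, Submodule.coe_smul, inner_smul_right, RingHom.id_apply] }
    have hbd : ∀ φ : KLMNE A, ‖ℓ φ‖ ≤ ‖f‖ * ‖φ‖ := by
      intro φ
      refine (norm_inner_le_norm _ _).trans ?_
      exact mul_le_mul_of_nonneg_left (hcoe_le φ) (norm_nonneg f)
    refine ⟨(InnerProductSpace.toDual ℂ (KLMNE A)).symm (ℓ.mkContinuous ‖f‖ hbd), fun φ => ?_⟩
    rw [← inner_conj_symm, InnerProductSpace.toDual_symm_apply, LinearMap.mkContinuous_apply]
    show (starRingEnd ℂ) ⟪f, ((φ.un : A.domain) : H)⟫_ℂ = _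
    exact inner_conj_symm _ _
  -- uniqueness of representing vectors
  have huniq : ∀ f g' : H, (∀ φ : A.domain, ⟪(φ : H), f⟫_ℂ = ⟪(φ : H), g'⟫_ℂ) → f = g' := by
    intro f g' h
    rw [← sub_eq_zero]
    refine hdense.eq_zero_of_inner_left ℂ fun v' hv' => ?_
    obtain ⟨v, rfl⟩ : ∃ v : A.domain, (v : H) = v' := ⟨⟨v', hv'⟩, rfl⟩
    have h2 : ⟪(v : H), f - g'⟫_ℂ = 0 := by rw [inner_sub_right, h v, sub_self]
    rw [← inner_conj_symm, h2, map_zero]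
  have hkey : ∀ (f : H) (ψ : KLMNE A),
      (∀ φ : KLMNE A, ⟪φ, ψ⟫_ℂ = ⟪((φ.un : A.domain) : H), f⟫_ℂ) →
      ∀ φ : A.domain, ⟪A φ, A ψ.un⟫_ℂ + X φ ψ.un
        = ⟪(φ : H), f - ((b + 1 : ℝ) : ℂ) • ((ψ.un : A.domain) : H)⟫_ℂ := by
    intro f ψ h φ
    have h1 := h (KLMNE.mk φ)
    rw [hinnerE, KLMNE.un_mk] at h1
    rw [inner_sub_right, inner_smul_right, ← h1]
    ring
  -- the operator domain
  let S : Submodule ℂ H :=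
    { carrier := {x : H | ∃ hx : x ∈ A.domain, ∃ fx : H, ∀ φ : A.domain,
        ⟪A φ, A ⟨x, hx⟩⟫_ℂ + X φ ⟨x, hx⟩ = ⟪(φ : H), fx⟫_ℂ}
      zero_mem' := by
        refine ⟨A.domain.zero_mem, 0, fun φ => ?_⟩
        have e : (⟨(0 : H), A.domain.zero_mem⟩ : A.domain) = 0 := Subtype.ext rfl
        rw [e, LinearPMap.map_zero, inner_zero_right, inner_zero_right, hX2zero, add_zero]
      add_mem' := by
        rintro x y ⟨hx, fx, hfx⟩ ⟨hy, fy, hfy⟩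
        refine ⟨A.domain.add_mem hx hy, fx + fy, fun φ => ?_⟩
        have e : (⟨x + y, A.domain.add_mem hx hy⟩ : A.domain) = ⟨x, hx⟩ + ⟨y, hy⟩ :=
          Subtype.ext rfl
        rw [e, LinearPMap.map_add, inner_add_right, hX2add, inner_add_right, ← hfx φ, ← hfy φ]
        ring
      smul_mem' := by
        rintro c x ⟨hx, fx, hfx⟩
        refine ⟨A.domain.smul_mem c hx, c • fx, fun φ => ?_⟩
        have e : (⟨c • x, A.domain.smul_mem c hx⟩ : A.domain) = c • (⟨x, hx⟩ : A.domain) :=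
          Subtype.ext rfl
        rw [e, LinearPMap.map_smul, inner_smul_right, hX2smul, inner_smul_right, ← hfx φ]
        ring }
  have hmemS : ∀ x : H, x ∈ S ↔ ∃ hx : x ∈ A.domain, ∃ fx : H, ∀ φ : A.domain,
      ⟪A φ, A ⟨x, hx⟩⟫_ℂ + X φ ⟨x, hx⟩ = ⟪(φ : H), fx⟫_ℂ := fun x => Iff.rfl
  have hdomS : ∀ x : S, (x : H) ∈ A.domain := fun x => ((hmemS _).mp x.2).choose
  have hBex : ∀ x : S, ∃ fx : H, ∀ φ : A.domain,
      ⟪A φ, A ⟨(x : H), hdomS x⟩⟫_ℂ + X φ ⟨(x : H), hdomS x⟩ = ⟪(φ : H), fx⟫_ℂ := by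
    intro x
    obtain ⟨hx, fx, hfx⟩ := (hmemS _).mp x.2
    exact ⟨fx, fun φ => hfx φ⟩
  let Bfun : S → H := fun x => (hBex x).choose
  have hBfun : ∀ (x : S) (φ : A.domain),
      ⟪A φ, A ⟨(x : H), hdomS x⟩⟫_ℂ + X φ ⟨(x : H), hdomS x⟩ = ⟪(φ : H), Bfun x⟫_ℂ :=
    fun x => (hBex x).choose_spec
  let B : H →ₗ.[ℂ] H :=
    ⟨S, { toFun := Bfun
          map_add' := by
            intro x y
            apply huniq
            intro φ
            rw [← hBfun (x + y) φ, inner_add_right, ← hBfun x φ, ← hBfun y φ]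
            have e : (⟨((x + y : S) : H), hdomS (x + y)⟩ : A.domain)
                = (⟨(x : H), hdomS x⟩ : A.domain) + ⟨(y : H), hdomS y⟩ := Subtype.ext (by simp)
            rw [e, LinearPMap.map_add, inner_add_right, hX2add]
            ring
          map_smul' := by
            intro c x
            apply huniq
            intro φ
            rw [RingHom.id_apply, ← hBfun (c • x) φ, inner_smul_right, ← hBfun x φ]
            have e : (⟨((c • x : S) : H), hdomS (c • x)⟩ : A.domain)
                = c • (⟨(x : H), hdomS x⟩ : A.domain) := Subtype.ext (by simp)
            rw [e, LinearPMap.map_smul, inner_smul_right, hX2smul]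
            ring }⟩
  have hBdom : ∀ ψ : B.domain, (ψ : H) ∈ A.domain := fun ψ => hdomS ψ
  have hrep : ∀ (φ : A.domain) (ψ : B.domain),
      ⟪(φ : H), B ψ⟫_ℂ = ⟪A φ, A ⟨(ψ : H), hBdom ψ⟩⟫_ℂ + X φ ⟨(ψ : H), hBdom ψ⟩ :=
    fun φ ψ => (hBfun ψ φ).symm
  -- lower bound
  have hlb : ∀ ψ : B.domain, -b * ‖(ψ : H)‖ ^ 2 ≤ (⟪(ψ : H), B ψ⟫_ℂ).re := by
    intro ψ
    have h : ⟪(ψ : H), B ψ⟫_ℂ = ⟪A ⟨(ψ : H), hBdom ψ⟩, A ⟨(ψ : H), hBdom ψ⟩⟫_ℂ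
        + X ⟨(ψ : H), hBdom ψ⟩ ⟨(ψ : H), hBdom ψ⟩ := hrep ⟨(ψ : H), hBdom ψ⟩ ψ
    rw [h, hdiag_re]
    have h2 := (abs_le.mp (hXre ⟨(ψ : H), hBdom ψ⟩)).1
    have e : ‖((⟨(ψ : H), hBdom ψ⟩ : A.domain) : H)‖ = ‖(ψ : H)‖ := rfl
    rw [e] at h2
    nlinarith [mul_nonneg h1a.le (sq_nonneg ‖A (⟨(ψ : H), hBdom ψ⟩ : A.domain)‖)]
  -- density of the domain
  have hSbot : Sᗮ = ⊥ := by
    rw [Submodule.eq_bot_iff]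
    intro u hu
    obtain ⟨ψ, hψ⟩ := hsolve u
    have hmem : ((ψ.un : A.domain) : H) ∈ S :=
      ⟨(ψ.un : A.domain).2, u - ((b + 1 : ℝ) : ℂ) • ((ψ.un : A.domain) : H),
        fun φ => hkey u ψ hψ φ⟩
    have h0 : ⟪ψ, ψ⟫_ℂ = 0 := by
      rw [hψ ψ]
      exact (Submodule.mem_orthogonal S u).mp hu _ hmem
    have hψ0 : ψ = 0 := inner_self_eq_zero.mp h0
    have hz : ∀ φ : A.domain, ⟪(φ : H), u⟫_ℂ = 0 := by
      intro φ
      have h := hψ (KLMNE.mk φ)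
      rw [hψ0, inner_zero_right] at h
      exact h.symm
    refine hdense.eq_zero_of_inner_left ℂ fun v' hv' => ?_
    obtain ⟨v, rfl⟩ : ∃ v : A.domain, (v : H) = v' := ⟨⟨v', hv'⟩, rfl⟩
    rw [← inner_conj_symm, hz v, map_zero]
  have hdenseB : Dense (B.domain : Set H) :=
    Submodule.dense_iff_topologicalClosure_eq_top.mpr
      (Submodule.topologicalClosure_eq_top_iff.mpr hSbot)
  -- surjectivity of B + (b+1)
  have hsurj : ∀ f : H, ∃ ψ : B.domain, B ψ + ((b + 1 : ℝ) : ℂ) • ((ψ : H)) = f := by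
    intro f
    obtain ⟨ψ, hψ⟩ := hsolve f
    have hmem : ((ψ.un : A.domain) : H) ∈ S :=
      ⟨(ψ.un : A.domain).2, f - ((b + 1 : ℝ) : ℂ) • ((ψ.un : A.domain) : H),
        fun φ => hkey f ψ hψ φ⟩
    refine ⟨⟨((ψ.un : A.domain) : H), hmem⟩, ?_⟩
    have hval : B ⟨((ψ.un : A.domain) : H), hmem⟩
        = f - ((b + 1 : ℝ) : ℂ) • ((ψ.un : A.domain) : H) := by
      apply huniq
      intro φ
      exact ((hBfun ⟨((ψ.un : A.domain) : H), hmem⟩ φ).symm).trans (hkey f ψ hψ φ)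
    rw [hval]
    simp
  -- symmetry of B
  have hsymB : B.IsFormalAdjoint B := by
    intro x y
    have hx2 : ⟪(y : H), B x⟫_ℂ
        = ⟪A ⟨(y : H), hBdom y⟩, A ⟨(x : H), hBdom x⟩⟫_ℂ
          + X ⟨(y : H), hBdom y⟩ ⟨(x : H), hBdom x⟩ := hrep ⟨(y : H), hBdom y⟩ x
    have hy2 : ⟪(x : H), B y⟫_ℂ
        = ⟪A ⟨(x : H), hBdom x⟩, A ⟨(y : H), hBdom y⟩⟫_ℂ
          + X ⟨(x : H), hBdom x⟩ ⟨(y : H), hBdom y⟩ := hrep ⟨(x : H), hBdom x⟩ y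
    calc ⟪B x, (y : H)⟫_ℂ = (starRingEnd ℂ) ⟪(y : H), B x⟫_ℂ := (inner_conj_symm _ _).symm
      _ = (starRingEnd ℂ) (⟪A ⟨(y : H), hBdom y⟩, A ⟨(x : H), hBdom x⟩⟫_ℂ
          + X ⟨(y : H), hBdom y⟩ ⟨(x : H), hBdom x⟩) := by rw [hx2]
      _ = ⟪A ⟨(x : H), hBdom x⟩, A ⟨(y : H), hBdom y⟩⟫_ℂ
          + X ⟨(x : H), hBdom x⟩ ⟨(y : H), hBdom y⟩ := by
          rw [map_add, inner_conj_symm, ← hsymm]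
      _ = ⟪(x : H), B y⟫_ℂ := hy2.symm
  have hBle : B ≤ LinearPMap.adjoint B := hsymB.le_adjoint hdenseB
  -- the adjoint is contained in B
  have hadj : ∀ y : (LinearPMap.adjoint B).domain,
      ∃ hyB : (y : H) ∈ B.domain, B ⟨(y : H), hyB⟩ = LinearPMap.adjoint B y := by
    intro y
    obtain ⟨ψ, hψ⟩ := hsurj (LinearPMap.adjoint B y + ((b + 1 : ℝ) : ℂ) • (y : H))
    have hyψ : (y : H) = (ψ : H) := by
      rw [← sub_eq_zero]
      have hz : ∀ g : H, ⟪g, (y : H) - (ψ : H)⟫_ℂ = 0 := by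
        intro g
        obtain ⟨x, hx⟩ := hsurj g
        rw [← hx, inner_sub_right]
        have hBxy : ⟪B x, (y : H)⟫_ℂ = ⟪(x : H), LinearPMap.adjoint B y⟫_ℂ := by
          have hfa := LinearPMap.adjoint_isFormalAdjoint hdenseB y x
          calc ⟪B x, (y : H)⟫_ℂ = (starRingEnd ℂ) ⟪(y : H), B x⟫_ℂ :=
                (inner_conj_symm _ _).symm
            _ = (starRingEnd ℂ) ⟪LinearPMap.adjoint B y, (x : H)⟫_ℂ := by rw [hfa]
            _ = ⟪(x : H), LinearPMap.adjoint B y⟫_ℂ := inner_conj_symm _ _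
        have e1 : ⟪B x + ((b + 1 : ℝ) : ℂ) • ((x : H)), (y : H)⟫_ℂ
            = ⟪(x : H), LinearPMap.adjoint B y + ((b + 1 : ℝ) : ℂ) • (y : H)⟫_ℂ := by
          rw [inner_add_left, inner_add_right, inner_smul_left, inner_smul_right,
            Complex.conj_ofReal, hBxy]
        have e2 : ⟪B x + ((b + 1 : ℝ) : ℂ) • ((x : H)), (ψ : H)⟫_ℂ
            = ⟪(x : H), B ψ + ((b + 1 : ℝ) : ℂ) • ((ψ : H))⟫_ℂ := by
          rw [inner_add_left, inner_add_right, inner_smul_left, inner_smul_right,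
            Complex.conj_ofReal, hsymB x ψ]
        rw [e1, e2, hψ, sub_self]
      have h := hz ((y : H) - (ψ : H))
      exact inner_self_eq_zero.mp h
    refine ⟨hyψ ▸ ψ.2, ?_⟩
    have e : (⟨(y : H), hyψ ▸ ψ.2⟩ : B.domain) = ψ := Subtype.ext hyψ
    rw [e]
    have h2 := hψ
    rw [hyψ] at h2
    exact add_right_cancel h2
  have hBsa : IsSelfAdjoint B := by
    rw [LinearPMap.isSelfAdjoint_def]
    have hadjle : LinearPMap.adjoint B ≤ B := by
      refine ⟨fun v hv => (hadj ⟨v, hv⟩).choose, fun p q hpq => ?_⟩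
      obtain ⟨hpB, hpv⟩ := hadj p
      have e : (⟨(p : H), hpB⟩ : B.domain) = q := Subtype.ext hpq
      rw [← hpv, e]
    exact le_antisymm hadjle hBle
  -- assembling the result
  refine ⟨B, ⟨hBsa, hBdom, hrep, hlb⟩, ?_⟩
  rintro B' ⟨hsa', hdom', hrep', hlb'⟩
  have hle1 : B' ≤ B := by
    have hdomle : B'.domain ≤ B.domain := by
      intro v hv
      exact ⟨hdom' ⟨v, hv⟩, B' ⟨v, hv⟩, fun φ => (hrep' φ ⟨v, hv⟩).symm⟩
    refine ⟨hdomle, ?_⟩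
    intro p q hpq
    apply huniq
    intro φ
    rw [hrep' φ p, hrep φ q]
    have e : (⟨(p : H), hdom' p⟩ : A.domain) = ⟨(q : H), hBdom q⟩ := Subtype.ext hpq
    rw [e]
  have hle2 : B ≤ B' := by
    have hfa : B'.IsFormalAdjoint B := by
      intro x y
      have hx2 : ⟪(y : H), B' x⟫_ℂ
          = ⟪A ⟨(y : H), hBdom y⟩, A ⟨(x : H), hdom' x⟩⟫_ℂ
            + X ⟨(y : H), hBdom y⟩ ⟨(x : H), hdom' x⟩ := hrep' ⟨(y : H), hBdom y⟩ x
      have hy2 : ⟪(x : H), B y⟫_ℂ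
          = ⟪A ⟨(x : H), hdom' x⟩, A ⟨(y : H), hBdom y⟩⟫_ℂ
            + X ⟨(x : H), hdom' x⟩ ⟨(y : H), hBdom y⟩ := hrep ⟨(x : H), hdom' x⟩ y
      calc ⟪B' x, (y : H)⟫_ℂ = (starRingEnd ℂ) ⟪(y : H), B' x⟫_ℂ := (inner_conj_symm _ _).symm
        _ = (starRingEnd ℂ) (⟪A ⟨(y : H), hBdom y⟩, A ⟨(x : H), hdom' x⟩⟫_ℂ
            + X ⟨(y : H), hBdom y⟩ ⟨(x : H), hdom' x⟩) := by rw [hx2]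
        _ = ⟪A ⟨(x : H), hdom' x⟩, A ⟨(y : H), hBdom y⟩⟫_ℂ
            + X ⟨(x : H), hdom' x⟩ ⟨(y : H), hBdom y⟩ := by
            rw [map_add, inner_conj_symm, ← hsymm]
        _ = ⟪(x : H), B y⟫_ℂ := hy2.symm
    have h := hfa.le_adjoint hsa'.dense_domain
    rwa [LinearPMap.isSelfAdjoint_def.mp hsa'] at h
  exact le_antisymm hle1 hle2
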